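/- arXiv:2502.05436 — 5 statements merged into one kernel-verified Lean document; each statement's English description precedes it below -/
import Mathlib

section
/- For a convex body K in R^n with 0 in its interior, the reverse radial Gauss image of K equals the radial Gauss image of the polar body: for every subset η ⊂ S^{n-1}, α*_K(η) = α_{K^*}(η), where α*_K(η) = {x/|x| : x ∈ ∂K, x lies in a supporting hyperplane of K with outer normal in η} and α_{K^*}(η) = {u ∈ S^{n-1} : ρ_{K^*}(u)u lies in a supporting hyperplane of K^* with outer normal in η}. -/
open Set MeasureTheory Metric Filter
open scoped RealInnerProductSpace Pointwise Topology

noncomputable section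

/-- Euclidean `n`-space. -/
abbrev Vn (n : ℕ) := EuclideanSpace ℝ (Fin n)

/-- The support function `h_K(x) = max {⟪y, x⟫ : y ∈ K}` of a compact convex set. -/
def suppFn {n : ℕ} (K : Set (Vn n)) (x : Vn n) : ℝ :=
  sSup ((fun y => ⟪y, x⟫) '' K)

/-- The radial function `ρ_K(x) = max {r ≥ 0 : r • x ∈ K}`. -/
def radFn {n : ℕ} (K : Set (Vn n)) (x : Vn n) : ℝ :=
  sSup {r : ℝ | 0 ≤ r ∧ r • x ∈ K}

/-- The polar body `K^* = {x : ⟪x, y⟫ ≤ 1 for all y ∈ K}`. -/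
def polarBody {n : ℕ} (K : Set (Vn n)) : Set (Vn n) :=
  {x | ∀ y ∈ K, ⟪x, y⟫ ≤ 1}

/-- The radial Gauss image: `α_K(ω) = {v ∈ S^{n-1} : ρ_K(u)u ∈ H_K(v) for some u ∈ ω}`. -/
def radGaussImage {n : ℕ} (K : Set (Vn n)) (ω : Set (Vn n)) : Set (Vn n) :=
  {v ∈ sphere (0 : Vn n) 1 | ∃ u ∈ ω, ⟪radFn K u • u, v⟫ = suppFn K v}

/-- The reverse radial Gauss image:
`α*_K(η) = {u ∈ S^{n-1} : ρ_K(u)u ∈ H_K(v) for some v ∈ η}`. -/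
def revRadGaussImage {n : ℕ} (K : Set (Vn n)) (η : Set (Vn n)) : Set (Vn n) :=
  {u ∈ sphere (0 : Vn n) 1 | ∃ v ∈ η, ⟪radFn K u • u, v⟫ = suppFn K v}

/-!
Write `ρ`, `h` for the radial and support functions. For `0` in the interior of `K`, a ray
argument gives `ρ_{K*}(v) = h_K(v)⁻¹`, and a supporting hyperplane of `K` at the boundary point
`ρ_K(u) u` gives `h_{K*}(u) = ρ_K(u)⁻¹`. Hence `ρ_K(u) ⟪u, v⟫ = h_K(v)` is equivalent to
`ρ_{K*}(v) ⟪v, u⟫ = h_{K*}(u)`: the radial point of `K` in direction `u` lies on the supporting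
hyperplane with normal `v` iff the same holds for `K*` with the roles of `u` and `v` swapped.
-/

section RadialSupport

variable {n : ℕ} {K : Set (Vn n)} {u v : Vn n}

lemma suppFn_isGreatest (hK : IsCompact K) (hne : K.Nonempty) (v : Vn n) :
    IsGreatest ((fun y => ⟪y, v⟫) '' K) (suppFn K v) :=
  (hK.image (continuous_id.inner continuous_const)).isGreatest_sSup (hne.image _)

lemma exists_gt_smul_mem_of_smul_mem_interior {r : ℝ} (h : r • u ∈ interior K) :
    ∃ t > r, t • u ∈ K := by
  have hray : ∀ᶠ t in 𝓝 r, t • u ∈ K :=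
    (continuous_id.smul continuous_const).continuousAt.preimage_mem_nhds
      (mem_interior_iff_mem_nhds.1 h)
  obtain ⟨t, htK, hrt⟩ := ((hray.filter_mono nhdsWithin_le_nhds).and self_mem_nhdsWithin).exists
    (f := 𝓝[>] r)
  exact ⟨t, hrt, htK⟩

lemma suppFn_pos (hK : IsCompact K) (h0 : (0 : Vn n) ∈ interior K) (hv : v ≠ 0) :
    0 < suppFn K v := by
  obtain ⟨t, ht, htK⟩ := exists_gt_smul_mem_of_smul_mem_interior (u := v) (by rwa [zero_smul])
  calc 0 < t * ‖v‖ ^ 2 := by positivity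
    _ = ⟪t • v, v⟫ := by rw [real_inner_smul_left, real_inner_self_eq_norm_sq]
    _ ≤ suppFn K v := (suppFn_isGreatest hK ⟨_, htK⟩ v).2 ⟨_, htK, rfl⟩

lemma isCompact_setOf_nonneg_smul_mem (hK : IsCompact K) (hu : u ≠ 0) :
    IsCompact {r : ℝ | 0 ≤ r ∧ r • u ∈ K} :=
  ((isClosedEmbedding_smul_left hu).isCompact_preimage hK).inter_left isClosed_Ici

lemma radFn_nonneg : 0 ≤ radFn K u :=
  Real.sSup_nonneg fun _ hr => hr.1

lemma le_radFn (hK : IsCompact K) (hu : u ≠ 0) {r : ℝ} (hr : 0 ≤ r) (hrK : r • u ∈ K) :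
    r ≤ radFn K u :=
  le_csSup (isCompact_setOf_nonneg_smul_mem hK hu).bddAbove ⟨hr, hrK⟩

lemma radFn_smul_mem (hK : IsCompact K) (h0 : (0 : Vn n) ∈ K) (hu : u ≠ 0) :
    radFn K u • u ∈ K :=
  ((isCompact_setOf_nonneg_smul_mem hK hu).sSup_mem ⟨0, le_rfl, by rwa [zero_smul]⟩).2

lemma radFn_smul_notMem_interior (hK : IsCompact K) (hu : u ≠ 0) :
    radFn K u • u ∉ interior K := fun h => by
  obtain ⟨t, ht, htK⟩ := exists_gt_smul_mem_of_smul_mem_interior h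
  exact (le_radFn hK hu (radFn_nonneg.trans ht.le) htK).not_gt ht

lemma radFn_pos (hK : IsCompact K) (h0 : (0 : Vn n) ∈ interior K) (hu : u ≠ 0) :
    0 < radFn K u := by
  obtain ⟨t, ht, htK⟩ := exists_gt_smul_mem_of_smul_mem_interior (u := u) (by rwa [zero_smul])
  exact ht.trans_le (le_radFn hK hu ht.le htK)

lemma smul_mem_polarBody_iff (hK : IsCompact K) (hne : K.Nonempty) {r : ℝ} (hr : 0 ≤ r) :
    r • v ∈ polarBody K ↔ r * suppFn K v ≤ 1 := by
  obtain ⟨⟨y₀, hy₀K, hy₀⟩, hle⟩ := suppFn_isGreatest hK hne v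
  simp only [polarBody, mem_ofPred_eq, real_inner_smul_left]
  refine ⟨fun h => ?_, fun h y hy => ?_⟩
  · simpa [← hy₀, real_inner_comm] using h y₀ hy₀K
  · rw [real_inner_comm]
    exact (mul_le_mul_of_nonneg_left (hle ⟨y, hy, rfl⟩) hr).trans h

lemma radFn_polarBody (hK : IsCompact K) (h0 : (0 : Vn n) ∈ interior K) (hv : v ≠ 0) :
    radFn (polarBody K) v = (suppFn K v)⁻¹ := by
  have hpos := suppFn_pos hK h0 hv
  have hray : {r : ℝ | 0 ≤ r ∧ r • v ∈ polarBody K} = Icc 0 (suppFn K v)⁻¹ := by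
    ext r
    simp only [mem_ofPred_eq, mem_Icc, inv_eq_one_div, le_div_iff₀ hpos]
    exact and_congr_right fun hr => smul_mem_polarBody_iff hK ⟨0, interior_subset h0⟩ hr
  rw [radFn, hray, csSup_Icc (inv_nonneg.2 hpos.le)]

/-- Supporting hyperplane of `K` at a point outside its interior, normalized by the polar body. -/
lemma exists_mem_polarBody_inner_eq_one (hKconv : Convex ℝ K) (h0 : (0 : Vn n) ∈ interior K)
    {x : Vn n} (hx : x ∉ interior K) : ∃ z ∈ polarBody K, ⟪z, x⟫ = 1 := by
  obtain ⟨f, hf⟩ := geometric_hahn_banach_open_point hKconv.interior isOpen_interior hx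
  have hfx : 0 < f x := by simpa using hf 0 h0
  have hfK : ∀ y ∈ K, f y ≤ f x := by
    have hcl : K ⊆ closure (interior K) := by
      rw [hKconv.closure_interior_eq_closure_of_nonempty_interior ⟨0, h0⟩]
      exact subset_closure
    exact fun y hy => closure_minimal (fun z hz => (hf z hz).le)
      (isClosed_Iic.preimage f.continuous) (hcl hy)
  have hdual (y : Vn n) : ⟪(InnerProductSpace.toDual ℝ (Vn n)).symm f, y⟫ = f y :=
    InnerProductSpace.toDual_symm_apply
  refine ⟨(f x)⁻¹ • (InnerProductSpace.toDual ℝ (Vn n)).symm f, fun y hy => ?_, ?_⟩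
  · rw [real_inner_smul_left, hdual, inv_mul_le_one₀ hfx]
    exact hfK y hy
  · rw [real_inner_smul_left, hdual, inv_mul_cancel₀ hfx.ne']

lemma suppFn_polarBody (hK : IsCompact K) (hKconv : Convex ℝ K)
    (h0 : (0 : Vn n) ∈ interior K) (hu : u ≠ 0) :
    suppFn (polarBody K) u = (radFn K u)⁻¹ := by
  have hρ := radFn_pos hK h0 hu
  obtain ⟨z, hz, hzu⟩ :=
    exists_mem_polarBody_inner_eq_one hKconv h0 (radFn_smul_notMem_interior hK hu)
  have hG : IsGreatest ((fun y => ⟪y, u⟫) '' polarBody K) (radFn K u)⁻¹ := by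
    refine ⟨⟨z, hz, ?_⟩, ?_⟩
    · rw [real_inner_smul_right] at hzu
      exact eq_inv_of_mul_eq_one_right hzu
    · rintro _ ⟨y, hy, rfl⟩
      have hyρ := hy _ (radFn_smul_mem hK (interior_subset h0) hu)
      rw [real_inner_smul_right] at hyρ
      rwa [inv_eq_one_div, le_div_iff₀ hρ, mul_comm]
  rw [suppFn, hG.csSup_eq]

lemma radFn_inner_eq_suppFn_iff (hK : IsCompact K) (hKconv : Convex ℝ K)
    (h0 : (0 : Vn n) ∈ interior K) (hu : u ≠ 0) (hv : v ≠ 0) :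
    ⟪radFn K u • u, v⟫ = suppFn K v ↔
      ⟪radFn (polarBody K) v • v, u⟫ = suppFn (polarBody K) u := by
  rw [radFn_polarBody hK h0 hv, suppFn_polarBody hK hKconv h0 hu, real_inner_smul_left,
    real_inner_smul_left, real_inner_comm v u, inv_mul_eq_iff_eq_mul₀ (suppFn_pos hK h0 hv).ne',
    eq_mul_inv_iff_mul_eq₀ (radFn_pos hK h0 hu).ne', mul_comm]

end RadialSupport

/-- For a convex body `K` with `0` in its interior, the reverse radial Gauss image of `K`
equals the radial Gauss image of the polar body: `α*_K(η) = α_{K^*}(η)` for all `η ⊆ S^{n-1}`. -/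
theorem stmt8 {n : ℕ} (K : Set (Vn n)) (hKcpt : IsCompact K) (hKconv : Convex ℝ K)
    (h0 : (0 : Vn n) ∈ interior K) :
    ∀ η : Set (Vn n), η ⊆ sphere (0 : Vn n) 1 →
      revRadGaussImage K η = radGaussImage (polarBody K) η := by
  intro η hη
  ext u
  refine and_congr_right fun hu => exists_congr fun v => and_congr_right fun hv => ?_
  exact radFn_inner_eq_suppFn_iff hKcpt hKconv h0 (ne_zero_of_mem_unit_sphere ⟨u, hu⟩)
    (ne_zero_of_mem_unit_sphere ⟨v, hη hv⟩)
end
end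

section
/- Let N > 0 and α_1,…,α_n > 0 satisfy α_1 + ⋯ + α_n = 1 and α_i + ⋯ + α_n < 1 − (i−1)/N for all i with 1 < i ≤ n. Then there exists t > 0 such that for all 0 < a_1 ≤ a_2 ≤ ⋯ ≤ a_n, Σ_{i=1}^n α_i log a_i ≤ ((1+t)/N) log(a_1 ⋯ a_n) + (1 − n(1+t)/N) log a_n. -/
open Set MeasureTheory Metric Filter
open scoped RealInnerProductSpace Pointwise Topology

noncomputable section

/-!
With `x i = log (a i)`, which is monotone, and `c = (1 + t) / N`, the right-hand side minus the
left-hand side is `∑ v i * x i` for the weights `v i = c - α i`, plus `1 - n c` at the last index.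
These weights sum to `0`, and their prefix sums `m c - (α_1 + ⋯ + α_m)`, `m < n`, are
nonpositive once `t` is small, because the hypothesis says precisely `α_1 + ⋯ + α_m > m / N`
for these finitely many `m`. Abel summation against a monotone sequence then gives
`∑ v i * x i ≥ 0`.
-/

open Finset in
theorem Finset.mul_sum_le_sum_mul_of_monotone {ι : Type*} [LinearOrder ι] {x v : ι → ℝ}
    (hx : Monotone x) {s : Finset ι} (hv : ∀ i ∈ s, ∑ j ∈ s with j < i, v j ≤ 0)
    (hs : ∑ i ∈ s, v i ≤ 0) {c : ℝ} (hc : ∀ i ∈ s, x i ≤ c) :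
    c * ∑ i ∈ s, v i ≤ ∑ i ∈ s, v i * x i := by
  induction s using Finset.induction_on_max generalizing c with
  | empty => simp
  | insert a s has ih =>
    have ha : a ∉ s := fun h => lt_irrefl a (has a h)
    have hprefix_a : ∑ j ∈ insert a s with j < a, v j = ∑ j ∈ s, v j := by
      rw [filter_insert, if_neg (lt_irrefl a), filter_true_of_mem has]
    have hv_s : ∀ i ∈ s, ∑ j ∈ s with j < i, v j ≤ 0 := fun i hi => by
      simpa [filter_insert, (has i hi).not_gt] using hv i (mem_insert_of_mem hi)
    have hs_s : ∑ j ∈ s, v j ≤ 0 := hprefix_a ▸ hv a (mem_insert_self a s)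
    have ih_a := ih hv_s hs_s (c := x a) fun i hi => hx (has i hi).le
    rw [sum_insert ha] at hs
    rw [sum_insert ha, sum_insert ha]
    calc c * (v a + ∑ i ∈ s, v i) ≤ x a * (v a + ∑ i ∈ s, v i) :=
          mul_le_mul_of_nonpos_right (hc a (mem_insert_self a s)) hs
      _ ≤ v a * x a + ∑ i ∈ s, v i * x i := by linarith

theorem Finset.sum_mul_nonneg_of_monotone {ι : Type*} [LinearOrder ι] {x v : ι → ℝ}
    (hx : Monotone x) {s : Finset ι} (hv : ∀ i ∈ s, ∑ j ∈ s with j < i, v j ≤ 0)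
    (hs : ∑ i ∈ s, v i = 0) : 0 ≤ ∑ i ∈ s, v i * x i := by
  obtain ⟨c, hc⟩ := (s.image x).bddAbove
  simpa [hs] using s.mul_sum_le_sum_mul_of_monotone hx hv hs.le
    fun i hi => hc (Finset.mem_coe.2 (Finset.mem_image_of_mem x hi))

theorem exists_pos_forall_one_add_mul_lt {ι : Type*} (s : Finset ι) {c d : ι → ℝ}
    (h : ∀ i ∈ s, c i < d i) : ∃ t > 0, ∀ i ∈ s, (1 + t) * c i < d i := by
  have hnear : ∀ᶠ t in 𝓝 (0 : ℝ), ∀ i ∈ s, (1 + t) * c i < d i :=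
    (eventually_all_finset s).2 fun i hi =>
      ContinuousAt.eventually_lt (by fun_prop) continuousAt_const (by simpa using h i hi)
  obtain ⟨t, ht, ht_pos⟩ :=
    ((hnear.filter_mono nhdsWithin_le_nhds).and self_mem_nhdsWithin).exists (f := 𝓝[>] (0 : ℝ))
  exact ⟨t, ht_pos, ht⟩

open Finset in
theorem sum_mul_le_of_monotone_of_mul_le_sum_Iio {n : ℕ} (hn : 0 < n) {α x : Fin n → ℝ}
    (hx : Monotone x) (hsum : ∑ i, α i = 1) {c : ℝ}
    (hc : ∀ i : Fin n, (i : ℝ) * c ≤ ∑ j ∈ Finset.Iio i, α j) :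
    ∑ i, α i * x i ≤
      c * ∑ i, x i + (1 - n * c) * x ⟨n - 1, Nat.sub_one_lt_of_lt hn⟩ := by
  set last : Fin n := ⟨n - 1, Nat.sub_one_lt_of_lt hn⟩
  set v : Fin n → ℝ := fun i => c - α i + if i = last then 1 - n * c else 0
  have hv_sum : ∑ i, v i = 0 := by
    simp [v, sum_add_distrib, sum_sub_distrib, hsum]
  have hv_prefix : ∀ i ∈ Finset.univ, ∑ j ∈ Finset.univ with j < i, v j ≤ 0 := by
    intro i _
    have hi_le : i ≤ last := Fin.le_def.2 (Nat.le_sub_one_of_lt i.isLt)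
    have hv_lt : ∀ j ∈ Finset.Iio i, v j = c - α j := fun j hj => by
      simp [v, ((Finset.mem_Iio.1 hj).trans_le hi_le).ne]
    rw [filter_gt_eq_Iio, sum_congr rfl hv_lt, sum_sub_distrib, sum_const, Fin.card_Iio,
      nsmul_eq_mul]
    linarith [hc i]
  have hexpand : ∑ i, v i * x i = c * ∑ i, x i + (1 - n * c) * x last - ∑ i, α i * x i := by
    simp [v, add_mul, sub_mul, sum_add_distrib, sum_sub_distrib, mul_sum]
    ring
  linarith [Finset.univ.sum_mul_nonneg_of_monotone hx hv_prefix hv_sum]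

/-- Elementary entropy-type inequality: if `N > 0` and positive `α_1,…,α_n` sum to `1` with
`α_i + ⋯ + α_n < 1 − (i−1)/N` for `1 < i ≤ n`, then there is `t > 0` such that for all
`0 < a_1 ≤ ⋯ ≤ a_n`,
`Σ α_i log a_i ≤ ((1+t)/N) log(a_1⋯a_n) + (1 − n(1+t)/N) log a_n`. -/
theorem stmt12 {n : ℕ} (hn : 0 < n) (N : ℝ) (α : Fin n → ℝ)
    (hsum : ∑ i, α i = 1)
    (hcond : ∀ i : Fin n, 0 < i.val →
      ∑ j ∈ Finset.univ.filter (fun j => i ≤ j), α j < 1 - (i.val : ℝ) / N) :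
    ∃ t : ℝ, 0 < t ∧ ∀ a : Fin n → ℝ, (∀ i, 0 < a i) → Monotone a →
      ∑ i, α i * Real.log (a i) ≤
        ((1 + t) / N) * Real.log (∏ i, a i) +
          (1 - (n : ℝ) * (1 + t) / N) * Real.log (a ⟨n - 1, by omega⟩) := by
  have hprefix : ∀ i ∈ Finset.univ.filter (fun i : Fin n => 0 < i.val),
      (i : ℝ) / N < ∑ j ∈ Finset.Iio i, α j := fun i hi => by
    have hsplit := Finset.sum_filter_add_sum_filter_not Finset.univ (fun j => i ≤ j) α
    simp only [not_le, Finset.filter_gt_eq_Iio] at hsplit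
    linarith [hcond i (Finset.mem_filter.1 hi).2]
  obtain ⟨t, ht, hlt⟩ := exists_pos_forall_one_add_mul_lt _ hprefix
  refine ⟨t, ht, fun a ha hmono => ?_⟩
  have hc : ∀ i : Fin n, (i : ℝ) * ((1 + t) / N) ≤ ∑ j ∈ Finset.Iio i, α j := fun i => by
    rcases Nat.eq_zero_or_pos i.val with h0 | hpos
    · have hi_min : IsMin i := fun j _ => Fin.le_def.2 (h0 ▸ j.val.zero_le)
      simp [Finset.Iio_eq_empty.2 hi_min, h0]
    · linarith [hlt i (Finset.mem_filter.2 ⟨Finset.mem_univ i, hpos⟩),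
        show (i : ℝ) * ((1 + t) / N) = (1 + t) * (i / N) by ring]
  have hlog_mono : Monotone fun i => Real.log (a i) := fun i j hij =>
    Real.log_le_log (ha i) (hmono hij)
  rw [Real.log_prod fun i _ => (ha i).ne', mul_div_assoc]
  exact sum_mul_le_of_monotone_of_mul_le_sum_Iio hn hlog_mono hsum hc
end
end

section
/- Let μ be a finite Borel measure on S^{n-1}, let e_1,…,e_n be an orthonormal basis of R^n, and for small δ ∈ (0, 1/√n) define the partition Ω_{i,δ} = {u ∈ S^{n-1} : |u·e_i| ≥ δ and |u·e_j| < δ for all j < i}, i = 1,…,n. Then the sets Ω_{1,δ},…,Ω_{n,δ} are pairwise disjoint, cover S^{n-1}, and lim_{δ→0^+} μ(Ω_{i,δ}) = μ(S^{n-i} \ S^{n-i-1}) for each i, where S^{n-i} = S^{n-1} ∩ span{e_i,…,e_n} and S^{-1} = ∅. -/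
open Set MeasureTheory Metric Filter
open scoped RealInnerProductSpace Pointwise Topology

noncomputable section

/-- The partition sets `Ω_{i,δ} = {u ∈ S^{n-1} : |u·e_i| ≥ δ, |u·e_j| < δ for j < i}`. -/
def spherePart {n : ℕ} (b : OrthonormalBasis (Fin n) ℝ (Vn n)) (i : Fin n) (δ : ℝ) :
    Set (Vn n) :=
  {u ∈ sphere (0 : Vn n) 1 | δ ≤ |⟪u, b i⟫| ∧ ∀ j : Fin n, j < i → |⟪u, b j⟫| < δ}

/-- The subspheres `S^{n-i} = S^{n-1} ∩ span{e_i,…,e_n}` (with `S^{-1} = ∅`). -/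
def subSphere {n : ℕ} (b : OrthonormalBasis (Fin n) ℝ (Vn n)) (k : ℕ) : Set (Vn n) :=
  sphere (0 : Vn n) 1 ∩ (Submodule.span ℝ ((⇑b) '' {j : Fin n | k ≤ j.val}) : Set (Vn n))

/-!
Let `B_{k,δ}` be the set of unit vectors whose first `k` coordinates are all smaller than `δ` in
absolute value. Then `Ω_{i,δ} = B_{i,δ} \ B_{i+1,δ}`, and as `δ ↓ 0` the sets `B_{k,δ}` decrease
to `subSphere b k`, so continuity from above of the finite measure `μ` gives the limit. The `Ω_{i,δ}`
cover the sphere because by Parseval a unit vector has a coordinate of size at least `1/√n`.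
-/

namespace OrthonormalBasis

variable {ι E : Type*} [Fintype ι] [NormedAddCommGroup E] [InnerProductSpace ℝ E]

theorem mem_span_image_iff (b : OrthonormalBasis ι ℝ E) (s : Set ι) (u : E) :
    u ∈ Submodule.span ℝ (b '' s) ↔ ∀ j ∉ s, ⟪u, b j⟫ = 0 := by
  rw [← b.coe_toBasis, Module.Basis.mem_span_image, Finsupp.support_subset_iff]
  simp only [b.coe_toBasis_repr_apply, b.repr_apply_apply, b.coe_toBasis, real_inner_comm]

theorem exists_le_abs_inner_of_norm_eq_one (b : OrthonormalBasis ι ℝ E) {u : E} (hu : ‖u‖ = 1)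
    {δ : ℝ} (hδ : Fintype.card ι * δ ^ 2 < 1) : ∃ j, δ ≤ |⟪u, b j⟫| := by
  by_contra! hsmall
  have hsum : ∑ j, ⟪b j, u⟫ ^ 2 ≤ ∑ _j : ι, δ ^ 2 :=
    Finset.sum_le_sum fun j _ => by
      rw [real_inner_comm, ← sq_abs]
      exact pow_le_pow_left₀ (abs_nonneg _) (hsmall j).le 2
  rw [b.sum_sq_inner_right, hu, Finset.sum_const, Finset.card_univ, nsmul_eq_mul] at hsum
  linarith

end OrthonormalBasis

section SpherePartition

variable {n : ℕ} (b : OrthonormalBasis (Fin n) ℝ (Vn n))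

def subSphereNbhd (k : ℕ) (δ : ℝ) : Set (Vn n) :=
  sphere (0 : Vn n) 1 ∩ {u | ∀ j : Fin n, j.val < k → |⟪u, b j⟫| < δ}

theorem subSphere_eq (k : ℕ) :
    subSphere b k = sphere (0 : Vn n) 1 ∩ {u | ∀ j : Fin n, j.val < k → ⟪u, b j⟫ = 0} := by
  ext u
  simp only [subSphere, mem_inter_iff, SetLike.mem_coe, b.mem_span_image_iff, mem_ofPred_eq,
    not_le]

theorem measurableSet_subSphere (k : ℕ) : MeasurableSet (subSphere b k) :=
  (isClosed_sphere.inter (Submodule.closed_of_finiteDimensional _)).measurableSet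

theorem subSphere_succ_subset (k : ℕ) : subSphere b (k + 1) ⊆ subSphere b k :=
  inter_subset_inter_right _ <| Submodule.span_mono <| image_mono fun _ hj => Nat.le_of_succ_le hj

theorem measurableSet_subSphereNbhd (k : ℕ) (δ : ℝ) : MeasurableSet (subSphereNbhd b k δ) := by
  have hopen : IsOpen {u : Vn n | ∀ j : Fin n, j.val < k → |⟪u, b j⟫| < δ} := by
    simp only [ofPred_forall]
    exact isOpen_iInter_of_finite fun j => isOpen_iInter_of_finite fun _ =>
      isOpen_lt (continuous_id.inner continuous_const).abs continuous_const
  exact isClosed_sphere.measurableSet.inter hopen.measurableSet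

theorem subSphereNbhd_mono (k : ℕ) : Monotone (subSphereNbhd b k) :=
  fun _ _ h => inter_subset_inter_right _ fun _ hu j hj => (hu j hj).trans_le h

theorem subSphereNbhd_succ_subset (k : ℕ) (δ : ℝ) :
    subSphereNbhd b (k + 1) δ ⊆ subSphereNbhd b k δ :=
  inter_subset_inter_right _ fun _ hu j hj => hu j (Nat.lt_succ_of_lt hj)

theorem biInter_subSphereNbhd (k : ℕ) : ⋂ δ > (0 : ℝ), subSphereNbhd b k δ = subSphere b k := by
  ext u
  simp only [subSphere_eq, subSphereNbhd, mem_iInter, mem_inter_iff, mem_ofPred_eq]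
  constructor
  · intro h
    refine ⟨(h 1 one_pos).1, fun j hj => ?_⟩
    by_contra hne
    exact lt_irrefl _ ((h _ (abs_pos.mpr hne)).2 j hj)
  · rintro ⟨hu, hzero⟩ δ hδ
    exact ⟨hu, fun j hj => by simpa [hzero j hj] using hδ⟩

theorem tendsto_measure_subSphereNbhd (μ : Measure (Vn n)) [IsFiniteMeasure μ] (k : ℕ) :
    Tendsto (fun δ => μ (subSphereNbhd b k δ)) (𝓝[>] 0) (𝓝 (μ (subSphere b k))) := by
  rw [← biInter_subSphereNbhd]
  exact tendsto_measure_biInter_gt (fun δ _ => (measurableSet_subSphereNbhd b k δ).nullMeasurableSet)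
    (fun _ _ _ h => subSphereNbhd_mono b k h) ⟨1, one_pos, measure_ne_top μ _⟩

theorem spherePart_eq_diff (i : Fin n) (δ : ℝ) :
    spherePart b i δ = subSphereNbhd b i.val δ \ subSphereNbhd b (i.val + 1) δ := by
  ext u
  simp only [spherePart, subSphereNbhd, Set.mem_sdiff, mem_inter_iff, mem_ofPred_eq,
    Nat.lt_succ_iff_lt_or_eq, Fin.val_inj]
  constructor
  · rintro ⟨hu, hi, hlt⟩
    exact ⟨⟨hu, hlt⟩, fun h => (h.2 i (Or.inr rfl)).not_ge hi⟩
  · rintro ⟨⟨hu, hlt⟩, hnot⟩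
    refine ⟨hu, ?_, hlt⟩
    by_contra! hi
    exact hnot ⟨hu, fun j hj => hj.elim (hlt j) (· ▸ hi)⟩

theorem spherePart_pairwiseDisjoint (δ : ℝ) :
    (univ : Set (Fin n)).PairwiseDisjoint (fun i => spherePart b i δ) := by
  have hdisj : ∀ i j, i < j → Disjoint (spherePart b i δ) (spherePart b j δ) :=
    fun i _ hij => disjoint_left.mpr fun _ hi hj => (hj.2.2 i hij).not_ge hi.2.1
  intro i _ j _ hne
  rcases hne.lt_or_gt with hij | hji
  · exact hdisj i j hij
  · exact (hdisj j i hji).symm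

theorem iUnion_spherePart {δ : ℝ} (hδ : n * δ ^ 2 < 1) :
    ⋃ i, spherePart b i δ = sphere (0 : Vn n) 1 := by
  refine subset_antisymm (iUnion_subset fun i => sep_subset _ _) fun u hu => ?_
  have hnorm : ‖u‖ = 1 := mem_sphere_zero_iff_norm.mp hu
  obtain ⟨i, hi, hmin⟩ := wellFounded_lt.has_min {j | δ ≤ |⟪u, b j⟫|}
    (b.exists_le_abs_inner_of_norm_eq_one hnorm (by simpa using hδ))
  exact mem_iUnion.mpr ⟨i, hu, hi, fun j hj => not_le.mp fun hle => hmin j hle hj⟩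

theorem tendsto_measure_spherePart (μ : Measure (Vn n)) [IsFiniteMeasure μ] (i : Fin n) :
    Tendsto (fun δ => μ (spherePart b i δ)) (𝓝[>] 0)
      (𝓝 (μ (subSphere b i.val \ subSphere b (i.val + 1)))) := by
  rw [measure_sdiff (subSphere_succ_subset b i.val)
    (measurableSet_subSphere b _).nullMeasurableSet (measure_ne_top μ _)]
  refine (ENNReal.Tendsto.sub (tendsto_measure_subSphereNbhd b μ i.val)
    (tendsto_measure_subSphereNbhd b μ (i.val + 1)) (Or.inl (measure_ne_top μ _))).congr
    fun δ => ?_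
  rw [spherePart_eq_diff, measure_sdiff (subSphereNbhd_succ_subset b i.val δ)
    (measurableSet_subSphereNbhd b _ _).nullMeasurableSet (measure_ne_top μ _)]

end SpherePartition

theorem sq_mul_lt_one_of_lt_one_div_sqrt {n : ℕ} {δ : ℝ} (hδ0 : 0 < δ)
    (hδ : δ < 1 / Real.sqrt n) : n * δ ^ 2 < 1 := by
  have hsqrt : 0 < Real.sqrt n := one_div_pos.mp (hδ0.trans hδ)
  have hδs : δ * Real.sqrt n < 1 := (lt_div_iff₀ hsqrt).mp hδ
  have hn : (n : ℝ) = Real.sqrt n ^ 2 := (Real.sq_sqrt n.cast_nonneg).symm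
  nlinarith [mul_pos hδ0 hsqrt]

/-- For a finite Borel measure `μ` on the sphere and `δ ∈ (0, 1/√n)`, the sets `Ω_{i,δ}` are
pairwise disjoint and cover `S^{n-1}`, and `μ(Ω_{i,δ}) → μ(S^{n-i} \ S^{n-i-1})` as `δ → 0⁺`. -/
theorem stmt13 {n : ℕ} (μ : Measure (Vn n)) [IsFiniteMeasure μ]
    (b : OrthonormalBasis (Fin n) ℝ (Vn n)) :
    (∀ δ : ℝ, 0 < δ → δ < 1 / Real.sqrt n →
      ((Set.univ : Set (Fin n)).PairwiseDisjoint (fun i => spherePart b i δ) ∧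
        ⋃ i, spherePart b i δ = sphere (0 : Vn n) 1)) ∧
    (∀ i : Fin n,
      Tendsto (fun δ => μ (spherePart b i δ)) (nhdsWithin 0 (Set.Ioi 0))
        (nhds (μ (subSphere b i.val \ subSphere b (i.val + 1))))) := by
  refine ⟨fun δ hδ0 hδ => ⟨spherePart_pairwiseDisjoint b δ, ?_⟩, tendsto_measure_spherePart b μ⟩
  exact iUnion_spherePart b (sq_mul_lt_one_of_lt_one_div_sqrt hδ0 hδ)
end
end

section
/- Let μ be a finite Borel measure on S^{n-1}, let a_{1},…,a_{n} > 0, let f_1,…,f_n be an orthonormal basis and e_1,…,e_n another orthonormal basis with |f_i − e_i| < δ/2 for all i, where δ ∈ (0,1/√n). Then (1/|μ|) ∫_{S^{n-1}} log(Σ_{i=1}^n |u·f_i|/a_i) dμ(u) ≥ log(δ/2) − Σ_{i=1}^n (μ(Ω_{i,δ})/|μ|) log a_i, where Ω_{i,δ} = {u : |u·e_i| ≥ δ, |u·e_j| < δ for j < i}. -/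
open Set MeasureTheory Metric Filter
open scoped RealInnerProductSpace Pointwise Topology

noncomputable section

/- Each `u ∈ S^{n-1}` has a coordinate `|u·e_i| ≥ δ` because `δ < 1/√n`, and the first such `i`
puts `u` in `Ω_{i,δ}`; there `|u·f_i| ≥ δ/2`, so the integrand is at least `log(δ/2) − log a_i`.
Integrating this lower bound over the partition `{Ω_{i,δ}}` of the sphere gives the estimate. -/

lemma exists_le_abs_inner_of_lt_inv_sqrt {ι E : Type*} [Fintype ι] [NormedAddCommGroup E]
    [InnerProductSpace ℝ E] (b : OrthonormalBasis ι ℝ E) {u : E} (hu : ‖u‖ = 1) {δ : ℝ}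
    (hδ : δ < 1 / Real.sqrt (Fintype.card ι)) : ∃ i, δ ≤ |⟪u, b i⟫| := by
  by_contra! hsmall
  have hcard : 1 ≤ Fintype.card ι * δ ^ 2 := calc
    1 = ∑ i, ⟪b i, u⟫ ^ 2 := by rw [b.sum_sq_inner_right, hu, one_pow]
    _ ≤ ∑ _i : ι, δ ^ 2 := Finset.sum_le_sum fun i _ => by
      rw [real_inner_comm]; exact sq_le_sq' (abs_lt.mp (hsmall i)).1.le (abs_lt.mp (hsmall i)).2.le
    _ = Fintype.card ι * δ ^ 2 := by simp
  have hpos : 0 < (Fintype.card ι : ℝ) := by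
    by_contra! h
    nlinarith [sq_nonneg δ]
  obtain ⟨i⟩ : Nonempty ι := Fintype.card_pos_iff.mp (by exact_mod_cast hpos)
  have hδ0 : 0 ≤ δ := (abs_nonneg _).trans (hsmall i).le
  have hsqrt : δ * Real.sqrt (Fintype.card ι) < 1 := (lt_div_iff₀ (Real.sqrt_pos.mpr hpos)).mp hδ
  have hsq : (δ * Real.sqrt (Fintype.card ι)) ^ 2 < 1 := by
    nlinarith [mul_nonneg hδ0 (Real.sqrt_nonneg (Fintype.card ι : ℝ))]
  rw [mul_pow, Real.sq_sqrt hpos.le] at hsq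
  linarith

lemma half_le_abs_inner_of_norm_sub_le {E : Type*} [NormedAddCommGroup E]
    [InnerProductSpace ℝ E] {u v w : E} {δ : ℝ} (hu : ‖u‖ ≤ 1) (hv : δ ≤ |⟪u, v⟫|)
    (hvw : ‖w - v‖ ≤ δ / 2) : δ / 2 ≤ |⟪u, w⟫| := by
  have : |⟪u, v⟫| - |⟪u, w⟫| ≤ δ / 2 := calc
    |⟪u, v⟫| - |⟪u, w⟫| ≤ |⟪u, w - v⟫| := by
      rw [inner_sub_right, abs_sub_comm]; exact abs_sub_abs_le_abs_sub _ _
    _ ≤ ‖u‖ * ‖w - v‖ := abs_real_inner_le_norm _ _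
    _ ≤ δ / 2 := by nlinarith [norm_nonneg u, norm_nonneg (w - v)]
  linarith

lemma sum_mul_measureReal_le_setIntegral {α ι : Type*} [MeasurableSpace α] [Fintype ι]
    {μ : Measure α} [IsFiniteMeasure μ] {A : ι → Set α} {g : α → ℝ} {c : ι → ℝ}
    (hA : ∀ i, MeasurableSet (A i)) (hdisj : Pairwise (Function.onFun Disjoint A))
    (hg : IntegrableOn g (⋃ i, A i) μ) (hc : ∀ i, ∀ x ∈ A i, c i ≤ g x) :
    ∑ i, c i * μ.real (A i) ≤ ∫ x in ⋃ i, A i, g x ∂μ := by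
  have hgA : ∀ i, IntegrableOn g (A i) μ := fun i => hg.mono_set (subset_iUnion A i)
  rw [integral_iUnion_fintype hA hdisj hgA]
  refine Finset.sum_le_sum fun i _ => ?_
  rw [mul_comm, ← smul_eq_mul]
  exact setIntegral_ge_of_const_le (hA i) (measure_ne_top μ _) (hc i) (hgA i)

lemma sub_sum_div_mul_le_one_div_mul {ι : Type*} [Fintype ι] {w x : ι → ℝ} {L I m : ℝ}
    (hm : 0 < m) (hw : ∑ i, w i = m) (h : ∑ i, (L - x i) * w i ≤ I) :
    L - ∑ i, (w i / m) * x i ≤ 1 / m * I := calc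
  L - ∑ i, (w i / m) * x i = 1 / m * ∑ i, (L - x i) * w i := by
    simp only [sub_mul, Finset.sum_sub_distrib, ← Finset.mul_sum, hw, div_mul_eq_mul_div,
      ← Finset.sum_div, mul_comm (x _)]
    field_simp
  _ ≤ 1 / m * I := by gcongr

namespace spherePart

variable {n : ℕ} (b : OrthonormalBasis (Fin n) ℝ (Vn n)) (δ : ℝ)

lemma measurableSet (i : Fin n) : MeasurableSet (spherePart b i δ) := by
  have hcont : ∀ j, Continuous fun u : Vn n => |⟪u, b j⟫| := fun j => by fun_prop
  have : spherePart b i δ = (sphere 0 1 ∩ {u | δ ≤ |⟪u, b i⟫|}) ∩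
      ⋂ j ∈ {j | j < i}, {u | |⟪u, b j⟫| < δ} := by
    ext u; simp [spherePart, and_assoc]
  rw [this]
  exact (isClosed_sphere.measurableSet.inter (measurableSet_le measurable_const
    (hcont i).measurable)).inter (.biInter (to_countable _) fun j _ =>
      measurableSet_lt (hcont j).measurable measurable_const)

lemma pairwise_disjoint : Pairwise (Function.onFun Disjoint fun i => spherePart b i δ) :=
  (pairwise_disjoint_on _).mpr fun i _ hij =>
    disjoint_left.mpr fun _ hi hj => (hj.2.2 i hij).not_ge hi.2.1

variable {δ} in
lemma iUnion_eq_sphere (hδ : δ < 1 / Real.sqrt n) : ⋃ i, spherePart b i δ = sphere 0 1 := by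
  refine Subset.antisymm (iUnion_subset fun i _ hu => hu.1) fun u hu => ?_
  have hnorm : ‖u‖ = 1 := by simpa using hu
  obtain ⟨i, hi⟩ := exists_le_abs_inner_of_lt_inv_sqrt b hnorm (by simpa using hδ)
  obtain ⟨k, hk, hmin⟩ := wellFounded_lt.has_min {i | δ ≤ |⟪u, b i⟫|} ⟨i, hi⟩
  exact mem_iUnion.mpr ⟨k, hu, hk, fun j hj => not_le.mp fun h => hmin j h hj⟩

end spherePart

lemma div_le_sum_abs_inner_div_of_mem_spherePart {n : ℕ} {e : OrthonormalBasis (Fin n) ℝ (Vn n)}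
    {f : Fin n → Vn n} {a : Fin n → ℝ} {δ : ℝ} (ha : ∀ i, 0 < a i)
    (hfe : ∀ i, ‖f i - e i‖ ≤ δ / 2) {i : Fin n} {u : Vn n} (hu : u ∈ spherePart e i δ) :
    δ / 2 / a i ≤ ∑ j, |⟪u, f j⟫| / a j := calc
  δ / 2 / a i ≤ |⟪u, f i⟫| / a i := by
    gcongr
    · exact (ha i).le
    · exact half_le_abs_inner_of_norm_sub_le (by simpa using hu.1.le) hu.2.1 (hfe i)
  _ ≤ ∑ j, |⟪u, f j⟫| / a j :=
    Finset.single_le_sum (f := fun j => |⟪u, f j⟫| / a j)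
      (fun j _ => div_nonneg (abs_nonneg _) (ha j).le) (Finset.mem_univ i)

/-- Entropy-type integral estimate: if `μ` is a finite Borel measure on `S^{n-1}` with
`|μ| > 0`, `a_i > 0`, and `f`, `e` are orthonormal bases with `|f_i − e_i| < δ/2` for some
`δ ∈ (0, 1/√n)`, then
`(1/|μ|)∫ log(Σ |u·f_i|/a_i) dμ ≥ log(δ/2) − Σ (μ(Ω_{i,δ})/|μ|) log a_i`. -/
theorem stmt14 {n : ℕ} (μ : Measure (Vn n)) [IsFiniteMeasure μ]
    (hμ : 0 < (μ (sphere (0 : Vn n) 1)).toReal)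
    (a : Fin n → ℝ) (ha : ∀ i, 0 < a i)
    (f e : OrthonormalBasis (Fin n) ℝ (Vn n)) (δ : ℝ) (hδ0 : 0 < δ)
    (hδn : δ < 1 / Real.sqrt n) (hfe : ∀ i, ‖f i - e i‖ < δ / 2) :
    (1 / (μ (sphere (0 : Vn n) 1)).toReal) *
        ∫ u in sphere (0 : Vn n) 1, Real.log (∑ i, |⟪u, f i⟫| / a i) ∂ μ ≥
      Real.log (δ / 2) -
        ∑ i, ((μ (spherePart e i δ)).toReal / (μ (sphere (0 : Vn n) 1)).toReal) *
          Real.log (a i) := by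
  have hS := spherePart.iUnion_eq_sphere e hδn
  have hlower (i : Fin n) {u : Vn n} (hu : u ∈ spherePart e i δ) :
      δ / 2 / a i ≤ ∑ j, |⟪u, f j⟫| / a j :=
    div_le_sum_abs_inner_div_of_mem_spherePart ha (fun j => (hfe j).le) hu
  have hlog (i : Fin n) (u : Vn n) (hu : u ∈ spherePart e i δ) :
      Real.log (δ / 2) - Real.log (a i) ≤ Real.log (∑ j, |⟪u, f j⟫| / a j) := by
    rw [← Real.log_div (by positivity) (ha i).ne']
    exact Real.log_le_log (div_pos (half_pos hδ0) (ha i)) (hlower i hu)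
  have hint : IntegrableOn (fun u => Real.log (∑ j, |⟪u, f j⟫| / a j)) (sphere 0 1) μ := by
    refine ContinuousOn.integrableOn_compact (isCompact_sphere 0 1)
      (.log (by fun_prop) fun u hu => ?_)
    obtain ⟨i, hi⟩ := mem_iUnion.mp (hS ▸ hu)
    exact ((div_pos (half_pos hδ0) (ha i)).trans_le (hlower i hi)).ne'
  have hbound := sum_mul_measureReal_le_setIntegral (spherePart.measurableSet e δ)
    (spherePart.pairwise_disjoint e δ) (hS ▸ hint) hlog
  have hmass : ∑ i, μ.real (spherePart e i δ) = μ.real (sphere 0 1) := by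
    rw [← hS, measureReal_iUnion_fintype (spherePart.pairwise_disjoint e δ)
      (spherePart.measurableSet e δ)]
  rw [hS] at hbound
  simp only [measureReal_def] at hbound hmass
  exact sub_sum_div_mul_le_one_div_mul hμ hmass hbound
end
end

section
/- Let q ∈ (0,1), 1 ≤ k < n, let e_1,…,e_n be an orthonormal basis of R^n and ε_0 > 0. Then there exists a constant c depending only on q, k, n, ε_0 such that for all a_1,…,a_n > 0 with a_{k+1},…,a_n > ε_0, one has (1/q) log ∫_{S^{n-1}} (Σ_{i=1}^n a_i |u·e_i|)^{-q} du ≤ c. -/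
open Set MeasureTheory Metric Filter
open scoped RealInnerProductSpace Pointwise Topology

noncomputable section

/-!
Some `a_j` exceeds `ε₀`, so the integrand is at most `ε₀^{-q} |⟪u, e_j⟫|^{-q}`, and it suffices
that `|⟪u, e⟫|^{-q}` is integrable on the sphere for a unit vector `e` and `q < 1`. Splitting the
sphere dyadically according to the size of `|⟪u, e⟫|`, this follows from the band estimate
`μ {u ∈ S^{n-1} : |⟪u, e⟫| ≤ s} ≤ C s`, since `∑ 2^{iq} 2^{-i} < ∞`. For the band estimate, cover
the sphere by the radial projections of the `2n` faces of the cube `[-1,1]^n`: these projections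
are Lipschitz, and the part of a face that projects into the band lies in a slab of width `O(s)`.
-/

open scoped ENNReal NNReal

theorem lipschitzOnWith_normalize {V : Type*} [NormedAddCommGroup V] [NormedSpace ℝ V] :
    LipschitzOnWith 2 (NormedSpace.normalize : V → V) {v | 1 ≤ ‖v‖} := by
  refine LipschitzOnWith.of_dist_le_mul fun v (hv : 1 ≤ ‖v‖) w (hw : 1 ≤ ‖w‖) => ?_
  have hv0 : 0 < ‖v‖ := one_pos.trans_le hv
  have hw0 : 0 < ‖w‖ := one_pos.trans_le hw
  have hsplit : NormedSpace.normalize v - NormedSpace.normalize w =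
      ‖v‖⁻¹ • (v - w) + (‖v‖⁻¹ - ‖w‖⁻¹) • w := by
    simp only [NormedSpace.normalize, smul_sub, sub_smul]
    abel
  have hcoef : |‖v‖⁻¹ - ‖w‖⁻¹| * ‖w‖ = ‖v‖⁻¹ * |‖w‖ - ‖v‖| := by
    rw [inv_sub_inv hv0.ne' hw0.ne', abs_div, abs_of_pos (mul_pos hv0 hw0)]
    field_simp
  rw [dist_eq_norm, dist_eq_norm, hsplit, NNReal.coe_ofNat]
  calc ‖‖v‖⁻¹ • (v - w) + (‖v‖⁻¹ - ‖w‖⁻¹) • w‖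
      ≤ ‖v‖⁻¹ * ‖v - w‖ + ‖v‖⁻¹ * |‖w‖ - ‖v‖| := by
        refine (norm_add_le _ _).trans_eq ?_
        rw [norm_smul, norm_smul, Real.norm_eq_abs, Real.norm_eq_abs, abs_inv, abs_norm, hcoef]
    _ ≤ 1 * ‖v - w‖ + 1 * ‖v - w‖ := by
        have hinv : ‖v‖⁻¹ ≤ 1 := inv_le_one_of_one_le₀ hv
        have hrev : |‖w‖ - ‖v‖| ≤ ‖v - w‖ := by
          rw [abs_sub_comm]
          exact abs_norm_sub_norm_le v w
        gcongr
    _ = 2 * ‖v - w‖ := by ring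

theorem Fin.lipschitzWith_insertNth {α : Type*} [PseudoMetricSpace α] {m : ℕ} (l : Fin (m + 1))
    (a : α) : LipschitzWith 1 (fun x : Fin m → α => Fin.insertNth (α := fun _ => α) l a x) := by
  refine LipschitzWith.of_dist_le_mul fun x y => ?_
  rw [NNReal.coe_one, one_mul, dist_pi_le_iff dist_nonneg]
  intro i
  rcases Fin.eq_self_or_eq_succAbove l i with rfl | ⟨t, rfl⟩
  · simp
  · simpa using dist_le_pi_dist x y t

theorem volume_le_ofReal_prod_of_forall_abs_le {ι : Type*} [Fintype ι] {s : Set (ι → ℝ)}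
    {c : ι → ℝ} (hc0 : 0 ≤ c) (hc : ∀ x ∈ s, ∀ i, |x i| ≤ c i) :
    volume s ≤ ENNReal.ofReal (∏ i, 2 * c i) := by
  have hsub : s ⊆ Icc (-c) c := fun x hx =>
    ⟨fun i => neg_le_of_abs_le (hc x hx i), fun i => le_of_abs_le (hc x hx i)⟩
  refine (measure_mono hsub).trans_eq ?_
  rw [Real.volume_Icc_pi, ENNReal.ofReal_prod_of_nonneg fun i _ => mul_nonneg zero_le_two (hc0 i)]
  simp only [Pi.neg_apply, sub_neg_eq_add, two_mul]

section CubeFaces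

variable {m : ℕ}

/-- The face `{v_l = σ}` of the cube `[-1,1]^{m+1}` is parametrised by its other coordinates
`x ∈ [-1,1]^m`; this is the radial projection of its point `x` onto the unit sphere. -/
def cubeFaceProj (l : Fin (m + 1)) (σ : ℝ) (x : Fin m → ℝ) : EuclideanSpace ℝ (Fin (m + 1)) :=
  NormedSpace.normalize (WithLp.toLp 2 (Fin.insertNth l σ x))

def cubeFaceSlab (l j : Fin (m + 1)) (σ r : ℝ) : Set (Fin m → ℝ) :=
  {x | (∀ t, |x t| ≤ 1) ∧ |Fin.insertNth (α := fun _ => ℝ) l σ x j| ≤ r}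

theorem lipschitzWith_cubeFaceProj (l : Fin (m + 1)) {σ : ℝ} (hσ : |σ| = 1) :
    LipschitzWith (2 * (m + 1)) (cubeFaceProj l σ) := by
  have hlp := (PiLp.lipschitzWith_toLp 2 fun _ : Fin (m + 1) => ℝ).comp
    (Fin.lipschitzWith_insertNth l σ)
  have := lipschitzOnWith_normalize.comp hlp.lipschitzOnWith (s := univ) fun x _ => by
    simpa [hσ] using PiLp.norm_apply_le (WithLp.toLp 2 (Fin.insertNth (α := fun _ => ℝ) l σ x)) l
  refine (lipschitzOnWith_univ.mp this).weaken ?_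
  simpa using NNReal.rpow_le_rpow_of_exponent_le (x := (m + 1 : ℝ≥0)) (by simp)
    (by norm_num : (2⁻¹ : ℝ) ≤ 1)

theorem volume_cubeFaceSlab_le (l j : Fin (m + 1)) {σ r : ℝ} (hσ : |σ| = 1) (hr : 0 ≤ r) :
    volume (cubeFaceSlab l j σ r) ≤ ENNReal.ofReal (2 ^ m * r) := by
  rcases Fin.eq_self_or_eq_succAbove l j with rfl | ⟨p, rfl⟩
  · -- on its own face the `j`-th coordinate is `σ = ±1`, so the slab is empty unless `r ≥ 1`
    rcases lt_or_ge r 1 with hr1 | hr1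
    · have hempty : cubeFaceSlab j j σ r = ∅ := eq_empty_of_forall_notMem fun x hx => by
        have := hx.2
        simp only [Fin.insertNth_apply_same, hσ] at this
        linarith
      simp [hempty]
    · refine (volume_le_ofReal_prod_of_forall_abs_le zero_le_one fun x hx => hx.1).trans
        (ENNReal.ofReal_le_ofReal ?_)
      simp only [Pi.one_apply, mul_one, Finset.prod_const, Finset.card_univ, Fintype.card_fin]
      nlinarith [pow_pos (two_pos : (0 : ℝ) < 2) m]
  · refine (volume_le_ofReal_prod_of_forall_abs_le (c := Function.update 1 p r) (fun t => ?_)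
      fun x hx t => ?_).trans_eq ?_
    · rcases eq_or_ne t p with rfl | h <;> simp [*]
    · rcases eq_or_ne t p with rfl | h
      · simpa [cubeFaceSlab] using hx.2
      · simpa [h] using hx.1 t
    · simp [Finset.prod_mul_distrib, Finset.prod_update_of_mem (Finset.mem_univ p)]

theorem hausdorffMeasure_image_cubeFaceSlab_le (l j : Fin (m + 1)) {σ r : ℝ} (hσ : |σ| = 1)
    (hr : 0 ≤ r) :
    μH[m] (cubeFaceProj l σ '' cubeFaceSlab l j σ r) ≤
      ENNReal.ofReal ((2 * (m + 1)) ^ m * 2 ^ m * r) := by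
  have hvol : (μH[m] : Measure (Fin m → ℝ)) = volume := by
    simpa using hausdorffMeasure_pi_real (ι := Fin m)
  calc μH[m] (cubeFaceProj l σ '' cubeFaceSlab l j σ r)
      ≤ ((2 * (m + 1) : ℝ≥0) : ℝ≥0∞) ^ (m : ℝ) * volume (cubeFaceSlab l j σ r) := by
        rw [← hvol]
        exact (lipschitzWith_cubeFaceProj l hσ).hausdorffMeasure_image_le (Nat.cast_nonneg m) _
    _ ≤ ((2 * (m + 1) : ℝ≥0) : ℝ≥0∞) ^ (m : ℝ) * ENNReal.ofReal (2 ^ m * r) := by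
        gcongr
        exact volume_cubeFaceSlab_le l j hσ hr
    _ = ENNReal.ofReal ((2 * (m + 1)) ^ m * 2 ^ m * r) := by
        rw [ENNReal.rpow_natCast, ← ENNReal.ofReal_coe_nnreal,
          ← ENNReal.ofReal_pow NNReal.zero_le_coe, ← ENNReal.ofReal_mul (by positivity)]
        congr 1
        push_cast
        ring

/-- Project from a face on which `|u_l|` is maximal; then `|u_l| ≥ 1 / √(m+1)`, whence the factor
`√(m+1)`. -/
theorem exists_cubeFaceProj_eq {u : EuclideanSpace ℝ (Fin (m + 1))} (hu : ‖u‖ = 1)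
    (j : Fin (m + 1)) : ∃ l, ∃ σ ∈ ({1, -1} : Finset ℝ),
      ∃ x ∈ cubeFaceSlab l j σ (√(m + 1) * |u j|), cubeFaceProj l σ x = u := by
  obtain ⟨l, -, hl⟩ := Finset.exists_max_image Finset.univ (fun i => |u i|) Finset.univ_nonempty
  set M := |u l|
  have hM : 1 ≤ (m + 1) * M ^ 2 := by
    have := EuclideanSpace.norm_sq_eq u
    simp only [hu, one_pow, Real.norm_eq_abs] at this
    calc (1 : ℝ) = ∑ i, |u i| ^ 2 := this
      _ ≤ ∑ _i : Fin (m + 1), M ^ 2 := by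
        gcongr with i
        exact hl i (Finset.mem_univ i)
      _ = (m + 1) * M ^ 2 := by simp
  have hM0 : 0 < M := by
    by_contra! h
    rw [le_antisymm h (abs_nonneg _)] at hM
    norm_num at hM
  have hMinv : M⁻¹ ≤ √(m + 1) := by
    rw [Real.le_sqrt (by positivity) (by positivity), inv_pow,
      inv_le_iff_one_le_mul₀ (by positivity)]
    exact hM
  have hσ : |M⁻¹ * u l| = 1 := by
    rw [abs_mul, abs_inv, abs_abs, inv_mul_cancel₀ hM0.ne']
  have hv : Fin.insertNth (α := fun _ => ℝ) l (M⁻¹ * u l) (fun t => M⁻¹ * u (l.succAbove t)) =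
      fun i => M⁻¹ * u i := by
    ext i
    rcases Fin.eq_self_or_eq_succAbove l i with rfl | ⟨t, rfl⟩ <;> simp
  refine ⟨l, M⁻¹ * u l, ?_, fun t => M⁻¹ * u (l.succAbove t), ⟨fun t => ?_, ?_⟩, ?_⟩
  · rcases abs_eq zero_le_one |>.mp hσ with h | h <;> simp [h]
  · rw [abs_mul, abs_inv, abs_abs, inv_mul_le_iff₀ hM0, mul_one]
    exact hl _ (Finset.mem_univ _)
  · rw [hv, abs_mul, abs_inv, abs_abs]
    exact mul_le_mul_of_nonneg_right hMinv (abs_nonneg _)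
  · rw [cubeFaceProj, hv, show WithLp.toLp 2 (fun i => M⁻¹ * u i) = M⁻¹ • u from rfl,
      NormedSpace.normalize_smul_of_pos (inv_pos.mpr hM0),
      NormedSpace.normalize_eq_self_of_norm_eq_one hu]

theorem exists_hausdorffMeasure_abs_apply_le_inter_sphere_le (j : Fin (m + 1)) :
    ∃ C : ℝ, ∀ s : ℝ, 0 ≤ s →
      μH[m] ({u : EuclideanSpace ℝ (Fin (m + 1)) | |u j| ≤ s} ∩ sphere 0 1) ≤
        ENNReal.ofReal (C * s) := by
  obtain ⟨K, hK⟩ : ∃ K : ℝ, K = (2 * (m + 1)) ^ m * 2 ^ m * √(m + 1) := ⟨_, rfl⟩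
  refine ⟨(m + 1) * 2 * K, fun s hs => ?_⟩
  have hcover : {u : EuclideanSpace ℝ (Fin (m + 1)) | |u j| ≤ s} ∩ sphere 0 1 ⊆
      ⋃ l, ⋃ σ ∈ ({1, -1} : Finset ℝ), cubeFaceProj l σ '' cubeFaceSlab l j σ (√(m + 1) * s) := by
    rintro u ⟨hus, hu⟩
    obtain ⟨l, σ, hσ, x, ⟨hx1, hxj⟩, rfl⟩ :=
      exists_cubeFaceProj_eq (mem_sphere_zero_iff_norm.mp hu) j
    simp only [mem_iUnion]
    exact ⟨l, σ, hσ, x, ⟨hx1, hxj.trans (by gcongr; exact hus)⟩, rfl⟩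
  calc μH[m] ({u : EuclideanSpace ℝ (Fin (m + 1)) | |u j| ≤ s} ∩ sphere 0 1)
      ≤ ∑ l, ∑ σ ∈ ({1, -1} : Finset ℝ),
          μH[m] (cubeFaceProj l σ '' cubeFaceSlab l j σ (√(m + 1) * s)) :=
        (measure_mono hcover).trans <| (measure_iUnion_fintype_le _ _).trans <|
          Finset.sum_le_sum fun l _ => measure_biUnion_finset_le _ _
    _ ≤ ∑ _l : Fin (m + 1), ∑ _σ ∈ ({1, -1} : Finset ℝ), ENNReal.ofReal (K * s) := by
        gcongr with l _ σ hσ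
        have hσ1 : |σ| = 1 := by rcases Finset.mem_insert.mp hσ with rfl | hσ <;> simp_all
        refine (hausdorffMeasure_image_cubeFaceSlab_le l j hσ1 (by positivity)).trans_eq ?_
        rw [hK]
        congr 1
        ring
    _ = ENNReal.ofReal ((m + 1) * 2 * K * s) := by
        rw [Finset.sum_const, Finset.sum_const, Finset.card_pair (by norm_num), Finset.card_univ,
          Fintype.card_fin, ← ENNReal.ofReal_nsmul, ← ENNReal.ofReal_nsmul]
        congr 1
        simp only [nsmul_eq_mul]
        push_cast
        ring

end CubeFaces

theorem OrthonormalBasis.exists_hausdorffMeasure_abs_inner_le_inter_sphere_le {m : ℕ}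
    {E : Type*} [NormedAddCommGroup E] [InnerProductSpace ℝ E] [MeasurableSpace E] [BorelSpace E]
    (b : OrthonormalBasis (Fin (m + 1)) ℝ E) (j : Fin (m + 1)) :
    ∃ C : ℝ, ∀ s : ℝ, 0 ≤ s →
      μH[m] ({u : E | |⟪u, b j⟫| ≤ s} ∩ sphere 0 1) ≤ ENNReal.ofReal (C * s) := by
  obtain ⟨C, hC⟩ := exists_hausdorffMeasure_abs_apply_le_inter_sphere_le j
  refine ⟨C, fun s hs => ?_⟩
  have hpre : {u : E | |⟪u, b j⟫| ≤ s} ∩ sphere 0 1 =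
      b.repr.toIsometryEquiv ⁻¹' ({v | |v j| ≤ s} ∩ sphere 0 1) := by
    ext u
    simp [b.repr_apply_apply, real_inner_comm]
  rw [hpre, IsometryEquiv.hausdorffMeasure_preimage]
  exact hC s hs

theorem ofReal_rpow_neg_le_tsum_indicator {x q : ℝ} (hq0 : 0 ≤ q) (hx0 : 0 < x) (hx1 : x ≤ 1) :
    ENNReal.ofReal x ^ (-q) ≤
      ∑' i : ℕ, (Iic (2⁻¹ ^ i)).indicator (fun _ => ENNReal.ofReal ((2 ^ q) ^ (i + 1))) x := by
  obtain ⟨i, hi, hi'⟩ := exists_nat_pow_near (one_le_inv₀ hx0 |>.mpr hx1) one_lt_two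
  have hxi : x ∈ Iic (2⁻¹ ^ i) := by
    rw [mem_Iic, inv_pow]
    exact (le_inv_comm₀ hx0 (pow_pos two_pos i)).mpr hi
  calc ENNReal.ofReal x ^ (-q) = ENNReal.ofReal (x⁻¹ ^ q) := by
        rw [ENNReal.ofReal_rpow_of_pos hx0, Real.rpow_neg hx0.le, Real.inv_rpow hx0.le]
    _ ≤ ENNReal.ofReal ((2 ^ q) ^ (i + 1)) := by
        gcongr
        rw [Real.rpow_pow_comm zero_le_two]
        exact Real.rpow_le_rpow (by positivity) hi'.le hq0
    _ = (Iic (2⁻¹ ^ i)).indicator (fun _ => ENNReal.ofReal ((2 ^ q) ^ (i + 1))) x := by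
        rw [indicator_of_mem hxi]
    _ ≤ _ := ENNReal.le_tsum i

theorem lintegral_ofReal_rpow_neg_lt_top {α : Type*} [MeasurableSpace α] {μ : Measure α}
    {f : α → ℝ} {q C : ℝ} (hq0 : 0 ≤ q) (hq1 : q < 1) (hf : Measurable f)
    (hf1 : ∀ᵐ x ∂μ, f x ≤ 1) (hC : ∀ s : ℝ, 0 ≤ s → μ {x | f x ≤ s} ≤ ENNReal.ofReal (C * s)) :
    ∫⁻ x, ENNReal.ofReal (f x) ^ (-q) ∂μ < ∞ := by
  set r : ℝ := 2 ^ q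
  set B : ℕ → Set α := fun i => f ⁻¹' Iic (2⁻¹ ^ i)
  have hB : ∀ i, MeasurableSet (B i) := fun i => hf measurableSet_Iic
  have hpos : ∀ᵐ x ∂μ, 0 < f x := by
    refine measure_mono_null (fun x hx => ?_) (nonpos_iff_eq_zero.mp ((hC 0 le_rfl).trans_eq ?_))
    · simpa using hx
    · simp
  have hpt : ∀ᵐ x ∂μ, ENNReal.ofReal (f x) ^ (-q) ≤
      ∑' i, (B i).indicator (fun _ => ENNReal.ofReal (r ^ (i + 1))) x := by
    filter_upwards [hpos, hf1] with x hx0 hx1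
    exact ofReal_rpow_neg_le_tsum_indicator hq0 hx0 hx1
  have hr : r / 2 < 1 := by
    rw [div_lt_one two_pos]
    simpa using Real.rpow_lt_rpow_of_exponent_lt one_lt_two hq1
  calc ∫⁻ x, ENNReal.ofReal (f x) ^ (-q) ∂μ
      ≤ ∫⁻ x, ∑' i, (B i).indicator (fun _ => ENNReal.ofReal (r ^ (i + 1))) x ∂μ :=
        lintegral_mono_ae hpt
    _ = ∑' i, ENNReal.ofReal (r ^ (i + 1)) * μ (B i) := by
        rw [lintegral_tsum fun i => (measurable_const.indicator (hB i)).aemeasurable]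
        simp_rw [lintegral_indicator_const (hB _)]
    _ ≤ ∑' i, ENNReal.ofReal (r * C) * ENNReal.ofReal (r / 2) ^ i := by
        refine ENNReal.tsum_le_tsum fun i => ?_
        refine (mul_le_mul_right (hC _ (by positivity)) _).trans_eq ?_
        rw [← ENNReal.ofReal_mul (by positivity), ← ENNReal.ofReal_pow (by positivity),
          ← ENNReal.ofReal_mul' (by positivity)]
        congr 1
        rw [div_eq_mul_inv, mul_pow]
        ring
    _ < ∞ := by
        rw [ENNReal.tsum_mul_left]
        exact ENNReal.mul_lt_top ENNReal.ofReal_lt_top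
          (tsum_geometric_lt_top.mpr (ENNReal.ofReal_lt_one.mpr hr))

theorem OrthonormalBasis.lintegral_sphere_ofReal_abs_inner_rpow_neg_lt_top {m : ℕ}
    {E : Type*} [NormedAddCommGroup E] [InnerProductSpace ℝ E] [MeasurableSpace E] [BorelSpace E]
    (b : OrthonormalBasis (Fin (m + 1)) ℝ E) (j : Fin (m + 1)) {q : ℝ} (hq0 : 0 ≤ q)
    (hq1 : q < 1) :
    ∫⁻ u in sphere (0 : E) 1, ENNReal.ofReal |⟪u, b j⟫| ^ (-q) ∂μH[m] < ∞ := by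
  obtain ⟨C, hC⟩ := b.exists_hausdorffMeasure_abs_inner_le_inter_sphere_le j
  refine lintegral_ofReal_rpow_neg_lt_top (C := C) hq0 hq1 (by fun_prop) ?_ fun s hs => ?_
  · refine ae_restrict_of_forall_mem isClosed_sphere.measurableSet fun u hu => ?_
    simpa [mem_sphere_zero_iff_norm.mp hu] using abs_real_inner_le_norm u (b j)
  · rw [Measure.restrict_apply' isClosed_sphere.measurableSet]
    exact hC s hs

theorem enorm_rpow_neg_le_of_mul_le {s t ε q : ℝ} (hq : 0 < q) (hε : 0 < ε) (ht : 0 ≤ t)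
    (hts : ε * t ≤ s) :
    ‖s ^ (-q)‖ₑ ≤ ENNReal.ofReal (ε ^ (-q)) * ENNReal.ofReal t ^ (-q) := by
  rw [Real.enorm_of_nonneg (Real.rpow_nonneg ((mul_nonneg hε.le ht).trans hts) _)]
  rcases ht.eq_or_lt with rfl | ht
  · simp [ENNReal.zero_rpow_of_neg (neg_neg_of_pos hq), Real.rpow_pos_of_pos hε]
  · rw [ENNReal.ofReal_rpow_of_pos ht, ← ENNReal.ofReal_mul (by positivity),
      ← Real.mul_rpow hε.le ht.le]
    exact ENNReal.ofReal_le_ofReal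
      (Real.rpow_le_rpow_of_nonpos (mul_pos hε ht) hts (neg_nonpos.mpr hq.le))

theorem Real.log_le_log_max_one_of_abs_le {x y : ℝ} (h : |x| ≤ y) :
    Real.log x ≤ Real.log (max y 1) := by
  rw [← Real.log_abs]
  rcases (abs_nonneg x).eq_or_lt with h0 | h0
  · rw [← h0, Real.log_zero]
    exact Real.log_nonneg (le_max_right _ _)
  · exact Real.log_le_log h0 (h.trans (le_max_left _ _))

theorem MeasureTheory.abs_integral_le_toReal_lintegral {α : Type*} [MeasurableSpace α]
    {μ : Measure α} {f : α → ℝ} {g : α → ℝ≥0∞} (hfg : ∀ x, ‖f x‖ₑ ≤ g x)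
    (hg : ∫⁻ x, g x ∂μ ≠ ∞) : |∫ x, f x ∂μ| ≤ (∫⁻ x, g x ∂μ).toReal := by
  rw [← Real.norm_eq_abs, ← toReal_enorm]
  exact ENNReal.toReal_mono hg ((enorm_integral_le_lintegral_enorm f).trans (lintegral_mono hfg))

theorem stmt15_general {n : ℕ} (q : ℝ) (hq0 : 0 < q) (hq1 : q < 1) (k : ℕ)
    (hkn : k < n) (b : OrthonormalBasis (Fin n) ℝ (Vn n)) (ε₀ : ℝ) (hε : 0 < ε₀) :
    ∃ c : ℝ, ∀ a : Fin n → ℝ, (∀ i, 0 < a i) → (∀ i : Fin n, k ≤ i.val → ε₀ < a i) →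
      (1 / q) * Real.log
          (∫ u in sphere (0 : Vn n) 1, (∑ i, a i * |⟪u, b i⟫|) ^ (-q) ∂ μH[(n : ℝ) - 1]) ≤
        c := by
  obtain ⟨m, rfl⟩ : ∃ m, n = m + 1 := ⟨n - 1, by omega⟩
  set j : Fin (m + 1) := ⟨k, hkn⟩
  set B := ∫⁻ u in sphere (0 : Vn (m + 1)) 1,
    ENNReal.ofReal (ε₀ ^ (-q)) * ENNReal.ofReal |⟪u, b j⟫| ^ (-q) ∂μH[m] with hB_def
  have hB : B ≠ ∞ := by
    rw [hB_def, lintegral_const_mul' _ _ ENNReal.ofReal_ne_top]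
    exact ENNReal.mul_ne_top ENNReal.ofReal_ne_top
      (b.lintegral_sphere_ofReal_abs_inner_rpow_neg_lt_top j hq0.le hq1).ne
  refine ⟨1 / q * Real.log (max B.toReal 1), fun a ha hak => ?_⟩
  rw [show ((m + 1 : ℕ) : ℝ) - 1 = m by push_cast; ring]
  refine mul_le_mul_of_nonneg_left (Real.log_le_log_max_one_of_abs_le
    (abs_integral_le_toReal_lintegral (fun u => ?_) hB)) (by positivity)
  refine enorm_rpow_neg_le_of_mul_le hq0 hε (abs_nonneg _) ?_
  exact (mul_le_mul_of_nonneg_right (hak j le_rfl).le (abs_nonneg _)).trans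
    (Finset.single_le_sum (f := fun i => a i * |⟪u, b i⟫|)
      (fun i _ => mul_nonneg (ha i).le (abs_nonneg _)) (Finset.mem_univ j))

/-- Cross-polytope dual quermassintegral estimate, case `0 < q < 1`: there is a constant `c`
depending only on `q`, `k`, `n`, `ε₀` such that for all `a_i > 0` with `a_i > ε₀` for `i > k`,
`(1/q) log ∫_{S^{n-1}} (Σ a_i|u·e_i|)^{-q} du ≤ c`. -/
theorem stmt15 {n : ℕ} (q : ℝ) (hq0 : 0 < q) (hq1 : q < 1) (k : ℕ) (hk1 : 1 ≤ k)
    (hkn : k < n) (b : OrthonormalBasis (Fin n) ℝ (Vn n)) (ε₀ : ℝ) (hε : 0 < ε₀) :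
    ∃ c : ℝ, ∀ a : Fin n → ℝ, (∀ i, 0 < a i) → (∀ i : Fin n, k ≤ i.val → ε₀ < a i) →
      (1 / q) * Real.log
          (∫ u in sphere (0 : Vn n) 1, (∑ i, a i * |⟪u, b i⟫|) ^ (-q) ∂ μH[(n : ℝ) - 1]) ≤
        c :=
  stmt15_general q hq0 hq1 k hkn b ε₀ hε
end
end
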